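/- Let x₀ ∉ closure(Ω) for a bounded open set Ω ⊆ ℝⁿ, φ(x) = log|x − x₀|, and ψ(x) = dist_{S^{n-1}}((x−x₀)/|x−x₀|, ω) the geodesic sphere distance to a fixed direction ω ∈ S^{n-1}, assumed smooth near closure(Ω). Then ρ = φ + iψ satisfies the complex eikonal equation (∇ρ)² = 0, i.e. |∇ψ|² = |∇φ|² and ∇φ·∇ψ = 0 on Ω. -/

import Mathlib

/-!
Write `r = ‖x - x₀‖`, `u = (x - x₀) / r` and `c = ⟪u, ω⟫`, so that `ψ = arccos ⟪u, ω⟫` and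
`c ∈ (-1, 1)` because `u ≠ ±ω`. The chain rule gives `∇φ = u / r` and
`∇ψ = -(ω - c u) / (r √(1 - c²))`. Since `ω - c u` is the component of `ω` orthogonal to `u`,
it has squared length `1 - c²` and is orthogonal to `∇φ`: both identities follow.
-/

open InnerProductSpace

section GradientCalculus

variable {F : Type*} [NormedAddCommGroup F] [InnerProductSpace ℝ F] [CompleteSpace F]

theorem HasDerivAt.comp_hasGradientAt {h : ℝ → ℝ} {h' : ℝ} {f : F → ℝ} {g : F} (x : F)
    (hh : HasDerivAt h h' (f x)) (hf : HasGradientAt f g x) :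
    HasGradientAt (fun y => h (f y)) (h' • g) x := by
  rw [hasGradientAt_iff_hasFDerivAt]
  refine (hh.hasFDerivAt.comp x hf.hasFDerivAt).congr_fderiv ?_
  ext y
  simp [toDual_apply_apply, mul_comm]

theorem HasGradientAt.mul {f g : F → ℝ} {f' g' x : F}
    (hf : HasGradientAt f f' x) (hg : HasGradientAt g g' x) :
    HasGradientAt (fun y => f y * g y) (f x • g' + g x • f') x := by
  rw [hasGradientAt_iff_hasFDerivAt]
  refine (hf.hasFDerivAt.mul hg.hasFDerivAt).congr_fderiv ?_
  ext y
  simp [toDual_apply_apply]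

theorem hasGradientAt_inner_sub_const (x₀ w x : F) :
    HasGradientAt (fun y => ⟪y - x₀, w⟫_ℝ) w x := by
  rw [hasGradientAt_iff_hasFDerivAt]
  refine (((hasFDerivAt_id x).sub_const x₀).inner ℝ (hasFDerivAt_const w x)).congr_fderiv ?_
  ext y
  simp [toDual_apply_apply, real_inner_comm]

theorem hasGradientAt_norm_sub_sq (x₀ x : F) :
    HasGradientAt (fun y => ‖y - x₀‖ ^ 2) ((2 : ℝ) • (x - x₀)) x := by
  rw [hasGradientAt_iff_hasFDerivAt]
  refine ((hasFDerivAt_id x).sub_const x₀).norm_sq.congr_fderiv ?_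
  ext y
  simp [toDual_apply_apply, two_smul]

end GradientCalculus

section Direction

variable {F : Type*} [NormedAddCommGroup F] [InnerProductSpace ℝ F]

noncomputable def direction (x₀ x : F) : F := ‖x - x₀‖⁻¹ • (x - x₀)

theorem norm_direction {x₀ x : F} (hx : x ≠ x₀) : ‖direction x₀ x‖ = 1 := by
  rw [direction, norm_smul, norm_inv, norm_norm,
    inv_mul_cancel₀ (norm_ne_zero_iff.2 (sub_ne_zero.2 hx))]

theorem neg_one_lt_real_inner_of_norm_eq_one {u w : F} (hu : ‖u‖ = 1) (hw : ‖w‖ = 1)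
    (h : u ≠ -w) : -1 < ⟪u, w⟫_ℝ := by
  have := (inner_lt_one_iff_real_of_norm_eq_one hu ((norm_neg w).trans hw)).2 h
  rw [inner_neg_right] at this
  linarith

theorem real_inner_sub_inner_smul_self {u : F} (hu : ‖u‖ = 1) (w : F) :
    ⟪u, w - ⟪u, w⟫_ℝ • u⟫_ℝ = 0 := by
  rw [inner_sub_right, real_inner_smul_right, real_inner_self_eq_norm_sq, hu]
  ring

theorem norm_sub_inner_smul_sq {u : F} (hu : ‖u‖ = 1) (w : F) :
    ‖w - ⟪u, w⟫_ℝ • u‖ ^ 2 = ‖w‖ ^ 2 - ⟪u, w⟫_ℝ ^ 2 := by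
  rw [norm_sub_sq_real, real_inner_smul_right, norm_smul, hu, real_inner_comm, Real.norm_eq_abs,
    mul_one, sq_abs]
  ring

variable [CompleteSpace F] {x₀ x : F}

theorem hasGradientAt_norm_sub (hx : x ≠ x₀) :
    HasGradientAt (fun y => ‖y - x₀‖) (direction x₀ x) x := by
  have hr : ‖x - x₀‖ ^ 2 ≠ 0 := pow_ne_zero _ (norm_ne_zero_iff.2 (sub_ne_zero.2 hx))
  have h := (Real.hasDerivAt_sqrt hr).comp_hasGradientAt x (hasGradientAt_norm_sub_sq x₀ x)
  simp only [Real.sqrt_sq (norm_nonneg _)] at h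
  convert h using 1
  rw [direction, smul_smul]
  congr 1
  field_simp

theorem hasGradientAt_log_norm_sub (hx : x ≠ x₀) :
    HasGradientAt (fun y => Real.log ‖y - x₀‖) (‖x - x₀‖⁻¹ • direction x₀ x) x :=
  (Real.hasDerivAt_log (norm_ne_zero_iff.2 (sub_ne_zero.2 hx))).comp_hasGradientAt x
    (hasGradientAt_norm_sub hx)

theorem hasGradientAt_inner_direction (hx : x ≠ x₀) (w : F) :
    HasGradientAt (fun y => ⟪direction x₀ y, w⟫_ℝ)
      (‖x - x₀‖⁻¹ • (w - ⟪direction x₀ x, w⟫_ℝ • direction x₀ x)) x := by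
  have hr : ‖x - x₀‖ ≠ 0 := norm_ne_zero_iff.2 (sub_ne_zero.2 hx)
  have h := ((hasDerivAt_inv hr).comp_hasGradientAt x (hasGradientAt_norm_sub hx)).mul
    (hasGradientAt_inner_sub_const x₀ w x)
  simp only [direction, real_inner_smul_left] at h ⊢
  convert h using 1
  match_scalars <;> field_simp

theorem hasGradientAt_arccos_inner_direction (hx : x ≠ x₀) {w : F}
    (hc₁ : -1 < ⟪direction x₀ x, w⟫_ℝ) (hc₂ : ⟪direction x₀ x, w⟫_ℝ < 1) :
    HasGradientAt (fun y => Real.arccos ⟪direction x₀ y, w⟫_ℝ)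
      (-(‖x - x₀‖ * √(1 - ⟪direction x₀ x, w⟫_ℝ ^ 2))⁻¹ •
        (w - ⟪direction x₀ x, w⟫_ℝ • direction x₀ x)) x := by
  convert (Real.hasDerivAt_arccos hc₁.ne' hc₂.ne).comp_hasGradientAt x
    (hasGradientAt_inner_direction hx w) using 1
  rw [smul_smul, mul_inv, one_div]
  ring_nf

end Direction

theorem eikonal_log_weight_general (n : ℕ) (Ω : Set (EuclideanSpace ℝ (Fin n)))
    (x₀ : EuclideanSpace ℝ (Fin n)) (hx₀ : x₀ ∉ closure Ω)
    (ω : EuclideanSpace ℝ (Fin n)) (hω : ‖ω‖ = 1)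
    (φ ψ : EuclideanSpace ℝ (Fin n) → ℝ)
    (hφ : ∀ x, φ x = Real.log ‖x - x₀‖)
    (hψ : ∀ x, ψ x = Real.arccos (inner ℝ ((‖x - x₀‖)⁻¹ • (x - x₀)) ω : ℝ))
    (hsmooth : ∀ x ∈ Ω, (‖x - x₀‖)⁻¹ • (x - x₀) ≠ ω ∧ (‖x - x₀‖)⁻¹ • (x - x₀) ≠ -ω) :
    ∀ x ∈ Ω, ‖gradient ψ x‖ ^ 2 = ‖gradient φ x‖ ^ 2 ∧
      (inner ℝ (gradient φ x) (gradient ψ x) : ℝ) = 0 := by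
  intro x hx
  have hne : x ≠ x₀ := fun h => hx₀ (h ▸ subset_closure hx)
  have hu : ‖direction x₀ x‖ = 1 := norm_direction hne
  have hc₁ := neg_one_lt_real_inner_of_norm_eq_one hu hω (hsmooth x hx).2
  have hc₂ := (inner_lt_one_iff_real_of_norm_eq_one hu hω).2 (hsmooth x hx).1
  rw [show φ = _ from funext hφ,
    show ψ = fun y => Real.arccos ⟪direction x₀ y, ω⟫_ℝ from funext hψ,
    (hasGradientAt_log_norm_sub hne).gradient,
    (hasGradientAt_arccos_inner_direction hne hc₁ hc₂).gradient]
  have hr : ‖x - x₀‖ ≠ 0 := norm_ne_zero_iff.2 (sub_ne_zero.2 hne)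
  have hs : 0 < 1 - ⟪direction x₀ x, ω⟫_ℝ ^ 2 := by nlinarith
  constructor
  · rw [norm_smul, norm_smul, mul_pow, mul_pow, norm_sub_inner_smul_sq hu, hω, hu, norm_neg,
      norm_inv, norm_inv, norm_mul, Real.norm_of_nonneg (Real.sqrt_nonneg _)]
    field_simp
    rw [Real.sq_sqrt hs.le]
  · rw [real_inner_smul_left, real_inner_smul_right, real_inner_sub_inner_smul_self hu, mul_zero,
      mul_zero]

/-- The complex eikonal equation for `ρ = φ + iψ`, where `φ(x) = log|x−x₀|` and
`ψ(x) = dist_{S^{n-1}}((x−x₀)/|x−x₀|, ω) = arccos⟨(x−x₀)/|x−x₀|, ω⟩` is the geodesic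
sphere distance to the direction `ω`. Under the smoothness condition that
`(x−x₀)/|x−x₀|` avoids `±ω` on `Ω`, one has `(∇ρ)² = 0`, i.e.
`|∇ψ|² = |∇φ|²` and `∇φ·∇ψ = 0` on `Ω`. -/
theorem eikonal_log_weight (n : ℕ) (Ω : Set (EuclideanSpace ℝ (Fin n)))
    (hΩo : IsOpen Ω) (hΩb : Bornology.IsBounded Ω)
    (x₀ : EuclideanSpace ℝ (Fin n)) (hx₀ : x₀ ∉ closure Ω)
    (ω : EuclideanSpace ℝ (Fin n)) (hω : ‖ω‖ = 1)
    (φ ψ : EuclideanSpace ℝ (Fin n) → ℝ)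
    (hφ : ∀ x, φ x = Real.log ‖x - x₀‖)
    (hψ : ∀ x, ψ x = Real.arccos (inner ℝ ((‖x - x₀‖)⁻¹ • (x - x₀)) ω : ℝ))
    (hsmooth : ∀ x ∈ Ω, (‖x - x₀‖)⁻¹ • (x - x₀) ≠ ω ∧ (‖x - x₀‖)⁻¹ • (x - x₀) ≠ -ω) :
    ∀ x ∈ Ω, ‖gradient ψ x‖ ^ 2 = ‖gradient φ x‖ ^ 2 ∧
      (inner ℝ (gradient φ x) (gradient ψ x) : ℝ) = 0 :=
  eikonal_log_weight_general n Ω x₀ hx₀ ω hω φ ψ hφ hψ hsmooth
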